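/- Let A \in \mathbb{R}^{n \times N}, x \in \mathbb{R}^n, \lambda > 0, and suppose there are vectors c \in \mathbb{R}^N, e \in \mathbb{R}^n, \nu \in \mathbb{R}^n, and index sets S \subseteq T \subseteq {1,...,N} such that: e = x - Ac, c is supported on S, A_S^T \nu = sign(c_S), \nu = \lambda e, \|A_{T \cap S^c}^T \nu\|_\infty \le 1, and \|A_{T^c}^T \nu\|_\infty < 1. Then any optimal solution (c^*, e^*) of min_{c,e} \|c\|_1 + (\lambda/2)\|e\|_2^2 subject to e = x - Ac satisfies c^*_{T^c} = 0. -/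
import Mathlib


open Matrix

/-- The objective of the robust SSC subproblem: `‖c‖₁ + (λ/2)‖e‖₂²`. -/
noncomputable def sscObj {n N : ℕ} (lam : ℝ) (c : Fin N → ℝ) (e : Fin n → ℝ) : ℝ :=
  (∑ i, |c i|) + lam / 2 * ∑ j, (e j) ^ 2

/-- Dual certificate lemma: under the stated conditions on `(c, e, ν)` and index
sets `S ⊆ T`, any optimal solution `(c*, e*)` of
`min ‖c‖₁ + (λ/2)‖e‖₂² s.t. e = x - Ac` satisfies `c*_{Tᶜ} = 0`. -/
theorem stmt_13 {n N : ℕ} (A : Matrix (Fin n) (Fin N) ℝ) (x : Fin n → ℝ)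
    (lam : ℝ) (hlam : 0 < lam)
    (c : Fin N → ℝ) (e : Fin n → ℝ) (ν : Fin n → ℝ)
    (S T : Set (Fin N)) (hST : S ⊆ T)
    (hfeas : e = x - A.mulVec c)
    (hsupp : ∀ i, c i ≠ 0 ↔ i ∈ S)
    (hcert1 : ∀ i ∈ S, (∑ j, A j i * ν j) = Real.sign (c i))
    (hcert2 : ∀ j, ν j = lam * e j)
    (hcert3 : ∀ i ∈ T, i ∉ S → |∑ j, A j i * ν j| ≤ 1)
    (hcert4 : ∀ i, i ∉ T → |∑ j, A j i * ν j| < 1)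
    (cstar : Fin N → ℝ) (estar : Fin n → ℝ)
    (hfeas' : estar = x - A.mulVec cstar)
    (hopt : ∀ (c' : Fin N → ℝ) (e' : Fin n → ℝ), e' = x - A.mulVec c' →
      sscObj lam cstar estar ≤ sscObj lam c' e') :
    ∀ i, i ∉ T → cstar i = 0 := by
  classical
  set q : Fin N → ℝ := fun i => ∑ j, A j i * ν j with hq
  -- exchange of sums
  have hsum : ∀ (c' : Fin N → ℝ),
      ∑ j, ν j * (A.mulVec c') j = ∑ i, q i * c' i := by
    intro c'
    simp only [Matrix.mulVec, dotProduct, Finset.mul_sum]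
    rw [Finset.sum_comm]
    refine Finset.sum_congr rfl fun i _ => ?_
    rw [hq, Finset.sum_mul]
    exact Finset.sum_congr rfl fun j _ => by ring
  -- on S, q i * c i = |c i|
  have hqc : ∑ i, q i * c i = ∑ i, |c i| := by
    refine Finset.sum_congr rfl fun i _ => ?_
    by_cases h : c i = 0
    · simp [h]
    · have hiS := (hsupp i).mp h
      have hqi : q i = Real.sign (c i) := hcert1 i hiS
      rw [hqi]
      rcases lt_trichotomy (c i) 0 with h1 | h1 | h1
      · rw [Real.sign_of_neg h1, abs_of_neg h1]; ring
      · exact absurd h1 h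
      · rw [Real.sign_of_pos h1, abs_of_pos h1]; ring
  -- |q i| ≤ 1 everywhere
  have hqle : ∀ i, |q i| ≤ 1 := by
    intro i
    by_cases hT : i ∈ T
    · by_cases hS : i ∈ S
      · rw [show q i = Real.sign (c i) from hcert1 i hS]
        rcases lt_trichotomy (c i) 0 with h1 | h1 | h1
        · rw [Real.sign_of_neg h1]; norm_num
        · rw [h1, Real.sign_zero]; norm_num
        · rw [Real.sign_of_pos h1]; norm_num
      · exact hcert3 i hT hS
    · exact (hcert4 i hT).le
  -- each |cstar i| - q i * cstar i is nonnegative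
  have hterm : ∀ i, 0 ≤ |cstar i| - q i * cstar i := by
    intro i
    have h1 : q i * cstar i ≤ |q i * cstar i| := le_abs_self _
    have h2 : |q i * cstar i| = |q i| * |cstar i| := abs_mul _ _
    have h3 : |q i| * |cstar i| ≤ 1 * |cstar i| :=
      mul_le_mul_of_nonneg_right (hqle i) (abs_nonneg _)
    linarith
  -- relate ν-sums via feasibility
  have hνe : ∑ j, ν j * e j = (∑ j, ν j * x j) - ∑ i, q i * c i := by
    rw [← hsum c, ← Finset.sum_sub_distrib]
    refine Finset.sum_congr rfl fun j _ => ?_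
    rw [hfeas]; simp [Pi.sub_apply]; ring
  have hνestar : ∑ j, ν j * estar j = (∑ j, ν j * x j) - ∑ i, q i * cstar i := by
    rw [← hsum cstar, ← Finset.sum_sub_distrib]
    refine Finset.sum_congr rfl fun j _ => ?_
    rw [hfeas']; simp [Pi.sub_apply]; ring
  -- convexity of the quadratic term
  have hquad : lam / 2 * ∑ j, (e j) ^ 2 +
      ((∑ j, ν j * estar j) - ∑ j, ν j * e j) ≤ lam / 2 * ∑ j, (estar j) ^ 2 := by
    have h : ∀ j ∈ Finset.univ,
        lam / 2 * (e j) ^ 2 + (ν j * estar j - ν j * e j) ≤ lam / 2 * (estar j) ^ 2 := by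
      intro j _
      rw [hcert2 j]
      nlinarith [mul_nonneg (by linarith : (0:ℝ) ≤ lam / 2) (sq_nonneg (estar j - e j))]
    have := Finset.sum_le_sum h
    rw [Finset.sum_add_distrib, Finset.sum_sub_distrib, ← Finset.mul_sum,
      ← Finset.mul_sum] at this
    linarith
  -- assemble: the key slack sum is ≤ 0
  have hle := hopt c e hfeas
  have hkey : ∑ i, (|cstar i| - q i * cstar i) ≤ 0 := by
    rw [Finset.sum_sub_distrib]
    simp only [sscObj] at hle
    linarith [hquad, hνe, hνestar, hqc, hle]
  have hzero : ∀ i ∈ Finset.univ, |cstar i| - q i * cstar i = 0 := by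
    rw [← Finset.sum_eq_zero_iff_of_nonneg (fun i _ => hterm i)]
    exact le_antisymm hkey (Finset.sum_nonneg fun i _ => hterm i)
  intro i hiT
  by_contra hne
  have h0 : |cstar i| - q i * cstar i = 0 := hzero i (Finset.mem_univ i)
  have hpos : 0 < |cstar i| := abs_pos.mpr hne
  have h1 : q i * cstar i ≤ |q i| * |cstar i| := (le_abs_self _).trans (abs_mul _ _).le
  have h2 : |q i| * |cstar i| < 1 * |cstar i| :=
    mul_lt_mul_of_pos_right (hcert4 i hiT) hpos
  linarith
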